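/- arXiv:hep-th/0606215 — 8 statements merged into one kernel-verified Lean document; each statement's English description precedes it below -/
import Mathlib

section
/- Let R be a commutative ring, L a Lie algebra over R, and S a commutative semigroup. Then there exists a unique R-bilinear bracket on the R-module Finsupp S L of finitely supported functions from S to L satisfying ⁅Finsupp.single s x, Finsupp.single t y⁆ = Finsupp.single (s * t) ⁅x, y⁆ for all s, t ∈ S and x, y ∈ L, and this bracket makes Finsupp S L into a Lie algebra over R (it is alternating, and it satisfies the Jacobi/Leibniz identity). -/
/-!
The bracket on `S →₀ L` is the convolution of the bracket of `L` along the multiplication of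
`S`. A bilinear map on finitely supported functions is determined by its values on pairs of
singletons, which gives uniqueness. On singletons, antisymmetry, the vanishing on the diagonal
and the Leibniz identity reduce to the same identities in `L`, once commutativity and
associativity of `S` have matched the indices.
-/

namespace Finsupp

section Convolution

variable {R S M N Q P : Type*} [CommSemiring R]
  [AddCommMonoid M] [Module R M] [AddCommMonoid N] [Module R N]
  [AddCommMonoid Q] [Module R Q] [AddCommMonoid P] [Module R P]

theorem bilinear_ext {B B' : (S →₀ M) →ₗ[R] (S →₀ N) →ₗ[R] P}
    (h : ∀ s t x y, B (single s x) (single t y) = B' (single s x) (single t y)) : B = B' :=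
  lhom_ext fun s x => lhom_ext fun t y => h s t x y

theorem trilinear_ext {T T' : (S →₀ M) →ₗ[R] (S →₀ N) →ₗ[R] (S →₀ Q) →ₗ[R] P}
    (h : ∀ s t u x y z, T (single s x) (single t y) (single u z)
      = T' (single s x) (single t y) (single u z)) : T = T' :=
  lhom_ext fun s x => bilinear_ext fun t u y z => h s t u x y z

variable [Mul S]

noncomputable def convolution (m : M →ₗ[R] N →ₗ[R] P) :
    (S →₀ M) →ₗ[R] (S →₀ N) →ₗ[R] (S →₀ P) :=
  lsum R fun s => (lsum R).toLinearMap ∘ₗ LinearMap.pi fun t => m.compr₂ (lsingle (s * t))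

@[simp]
theorem convolution_single_single (m : M →ₗ[R] N →ₗ[R] P) (s t : S) (x : M) (y : N) :
    convolution m (single s x) (single t y) = single (s * t) (m x y) := by
  simp [convolution]

end Convolution

theorem apply_self_eq_zero_of_flip_eq_neg {R S M P : Type*} [CommSemiring R]
    [AddCommMonoid M] [Module R M] [AddCommGroup P] [Module R P]
    {B : (S →₀ M) →ₗ[R] (S →₀ M) →ₗ[R] P} (hB : B.flip = -B)
    (h : ∀ s x, B (single s x) (single s x) = 0) (f : S →₀ M) : B f f = 0 := by
  have skew (f g : S →₀ M) : B g f = -B f g := LinearMap.congr_fun₂ hB f g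
  induction f using induction_linear with
  | zero => simp
  | add f g hf hg => simp [hf, hg, skew f g]
  | single s x => exact h s x

section ExpandedBracket

variable (R L S : Type*) [CommRing R] [LieRing L] [LieAlgebra R L]

noncomputable def expandedBracket [Mul S] : (S →₀ L) →ₗ[R] (S →₀ L) →ₗ[R] (S →₀ L) :=
  convolution (LieModule.toEnd R L L : L →ₗ[R] L →ₗ[R] L)

variable {R L S}

@[simp]
theorem expandedBracket_single_single [Mul S] (s t : S) (x y : L) :
    expandedBracket R L S (single s x) (single t y) = single (s * t) ⁅x, y⁆ := by
  simp [expandedBracket]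

theorem expandedBracket_flip [CommMagma S] :
    (expandedBracket R L S).flip = -expandedBracket R L S :=
  bilinear_ext fun s t x y => by
    simp only [LinearMap.flip_apply, LinearMap.neg_apply, expandedBracket_single_single]
    rw [mul_comm t s, ← single_neg, lie_skew]

theorem expandedBracket_self [CommMagma S] (f : S →₀ L) : expandedBracket R L S f f = 0 :=
  apply_self_eq_zero_of_flip_eq_neg expandedBracket_flip (by simp) f

theorem expandedBracket_leibniz [CommSemigroup S] (f g h : S →₀ L) :
    expandedBracket R L S f (expandedBracket R L S g h)
      = expandedBracket R L S (expandedBracket R L S f g) h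
        + expandedBracket R L S g (expandedBracket R L S f h) := by
  set B := expandedBracket R L S
  -- the two sides as trilinear maps in `(f, g, h)`
  have key : (LinearMap.llcomp R _ _ _ ∘ₗ B).compl₂ B
      = B.compr₂ B + ((LinearMap.llcomp R _ _ _ ∘ₗ B).compl₂ B).flip :=
    trilinear_ext fun s t u x y z => by
      simp only [LinearMap.compl₂_apply, LinearMap.coe_comp, Function.comp_apply,
        LinearMap.llcomp_apply, LinearMap.add_apply, LinearMap.compr₂_apply,
        LinearMap.flip_apply, B, expandedBracket_single_single]
      rw [mul_assoc, mul_left_comm t s u, ← single_add, leibniz_lie]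
  exact congr($key f g h)

end ExpandedBracket

end Finsupp

/-- **The S-expanded algebra** (Theorem 1 of the paper).
For a commutative ring `R`, a Lie algebra `L` over `R` and a commutative
semigroup `S`, there is a unique `R`-bilinear bracket on `S →₀ L` satisfying
`⁅single s x, single t y⁆ = single (s * t) ⁅x, y⁆`, and this bracket is
alternating and satisfies the Leibniz/Jacobi identity, so that it makes
`S →₀ L` a Lie algebra over `R`. -/
theorem sExpansion_exists_unique_lieBracket
    (R : Type*) [CommRing R] (L : Type*) [LieRing L] [LieAlgebra R L]
    (S : Type*) [CommSemigroup S] :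
    ∃ B : (S →₀ L) →ₗ[R] (S →₀ L) →ₗ[R] (S →₀ L),
      (∀ (s t : S) (x y : L),
        B (Finsupp.single s x) (Finsupp.single t y)
          = Finsupp.single (s * t) ⁅x, y⁆) ∧
      (∀ f : S →₀ L, B f f = 0) ∧
      (∀ f g h : S →₀ L, B f (B g h) = B (B f g) h + B g (B f h)) ∧
      (∀ B' : (S →₀ L) →ₗ[R] (S →₀ L) →ₗ[R] (S →₀ L),
        (∀ (s t : S) (x y : L),
          B' (Finsupp.single s x) (Finsupp.single t y)
            = Finsupp.single (s * t) ⁅x, y⁆) → B' = B) :=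
  ⟨Finsupp.expandedBracket R L S, Finsupp.expandedBracket_single_single,
    Finsupp.expandedBracket_self, Finsupp.expandedBracket_leibniz,
    fun _ hB' => Finsupp.bilinear_ext fun s t x y => by simp [hB']⟩
end

section
/- Let L be a Lie algebra over a commutative ring R, and let V₀, V₁ be R-submodules of L such that V₀ ⊓ V₁ = ⊥, V₀ ⊔ V₁ = ⊤, and ⁅V₀, V₁⁆ ⊆ V₁. Let π : L →ₗ[R] V₀ be the projection onto V₀ along V₁ (π restricts to the identity on V₀ and vanishes on V₁). Then the bracket on V₀ defined by ⁅x, y⁆₀ := π ⁅x, y⁆ (for x, y ∈ V₀, the inner bracket taken in L) is alternating and satisfies the Jacobi identity; hence it makes V₀ a Lie algebra over R. -/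
/-! Every `a : L` differs from `π a` by an element of `V₁`, and brackets of `V₀` with `V₁` stay in
`V₁`, where `π` vanishes. Hence `π ⁅x, π a⁆ = π ⁅x, a⁆` for `x ∈ V₀` (and symmetrically), so the
inner projections in the reduced Jacobi identity can be dropped, leaving the Leibniz identity of
`L` followed by `π`. -/

section Projection

variable {R M : Type*} [Ring R] [AddCommGroup M] [Module R M] {V₀ V₁ : Submodule R M}
  {π : M →ₗ[R] V₀}

theorem Submodule.sub_coe_projection_mem (hsup : V₀ ⊔ V₁ = ⊤) (hπ₀ : ∀ x : V₀, π x = x)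
    (hπ₁ : ∀ y ∈ V₁, π y = 0) (a : M) : a - π a ∈ V₁ := by
  obtain ⟨v₀, hv₀, v₁, hv₁, rfl⟩ := Submodule.mem_sup.mp (hsup ▸ Submodule.mem_top : a ∈ V₀ ⊔ V₁)
  have hπ : π (v₀ + v₁) = ⟨v₀, hv₀⟩ := by
    rw [map_add, hπ₁ v₁ hv₁, add_zero, hπ₀ ⟨v₀, hv₀⟩]
  simpa [hπ] using hv₁

end Projection

section ReducedBracket

variable {R L : Type*} [CommRing R] [LieRing L] [LieAlgebra R L] {V₀ V₁ : Submodule R L}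
  {π : L →ₗ[R] V₀}

theorem projection_lie_projection_right (hsup : V₀ ⊔ V₁ = ⊤)
    (hbr : ∀ x ∈ V₀, ∀ y ∈ V₁, ⁅x, y⁆ ∈ V₁) (hπ₀ : ∀ x : V₀, π x = x)
    (hπ₁ : ∀ y ∈ V₁, π y = 0) (x : V₀) (a : L) :
    π ⁅(x : L), (π a : L)⁆ = π ⁅(x : L), a⁆ := by
  have h := hπ₁ _ (hbr x x.2 _ (Submodule.sub_coe_projection_mem hsup hπ₀ hπ₁ a))
  rwa [lie_sub, map_sub, sub_eq_zero, eq_comm] at h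

theorem projection_lie_projection_left (hsup : V₀ ⊔ V₁ = ⊤)
    (hbr : ∀ x ∈ V₀, ∀ y ∈ V₁, ⁅x, y⁆ ∈ V₁) (hπ₀ : ∀ x : V₀, π x = x)
    (hπ₁ : ∀ y ∈ V₁, π y = 0) (a : L) (z : V₀) :
    π ⁅(π a : L), (z : L)⁆ = π ⁅a, (z : L)⁆ := by
  rw [← lie_skew, map_neg, projection_lie_projection_right hsup hbr hπ₀ hπ₁, ← map_neg, lie_skew]

end ReducedBracket

theorem reducedAlgebra_isLieAlgebra_general
    (R : Type*) [CommRing R] (L : Type*) [LieRing L] [LieAlgebra R L]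
    (V₀ V₁ : Submodule R L)
    (hsup : V₀ ⊔ V₁ = ⊤)
    (hbr : ∀ x ∈ V₀, ∀ y ∈ V₁, ⁅x, y⁆ ∈ V₁)
    (π : L →ₗ[R] V₀)
    (hπ₀ : ∀ x : V₀, π (x : L) = x)
    (hπ₁ : ∀ y ∈ V₁, π y = 0) :
    (∀ x : V₀, π ⁅(x : L), (x : L)⁆ = 0) ∧
    (∀ x y z : V₀,
      π ⁅(x : L), ((π ⁅(y : L), (z : L)⁆ : V₀) : L)⁆
        = π ⁅((π ⁅(x : L), (y : L)⁆ : V₀) : L), (z : L)⁆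
          + π ⁅(y : L), ((π ⁅(x : L), (z : L)⁆ : V₀) : L)⁆) := by
  refine ⟨fun x => by rw [lie_self, map_zero], fun x y z => ?_⟩
  have right := projection_lie_projection_right hsup hbr hπ₀ hπ₁
  have left := projection_lie_projection_left hsup hbr hπ₀ hπ₁
  rw [right, left, right, leibniz_lie, map_add]

/-- **The reduced algebra `|V₀|`** (Definition 3 of the paper).
Let `L = V₀ ⊕ V₁` (internal direct sum of submodules) with `⁅V₀, V₁⁆ ⊆ V₁`,
and let `π : L →ₗ[R] V₀` be the projection onto `V₀` along `V₁`.  Then the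
bracket `⁅x, y⁆₀ := π ⁅x, y⁆` on `V₀` is alternating and satisfies the
Jacobi (Leibniz) identity, hence makes `V₀` a Lie algebra over `R`. -/
theorem reducedAlgebra_isLieAlgebra
    (R : Type*) [CommRing R] (L : Type*) [LieRing L] [LieAlgebra R L]
    (V₀ V₁ : Submodule R L)
    (hinf : V₀ ⊓ V₁ = ⊥) (hsup : V₀ ⊔ V₁ = ⊤)
    (hbr : ∀ x ∈ V₀, ∀ y ∈ V₁, ⁅x, y⁆ ∈ V₁)
    (π : L →ₗ[R] V₀)
    (hπ₀ : ∀ x : V₀, π (x : L) = x)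
    (hπ₁ : ∀ y ∈ V₁, π y = 0) :
    (∀ x : V₀, π ⁅(x : L), (x : L)⁆ = 0) ∧
    (∀ x y z : V₀,
      π ⁅(x : L), ((π ⁅(y : L), (z : L)⁆ : V₀) : L)⁆
        = π ⁅((π ⁅(x : L), (y : L)⁆ : V₀) : L), (z : L)⁆
          + π ⁅(y : L), ((π ⁅(x : L), (z : L)⁆ : V₀) : L)⁆) :=
  reducedAlgebra_isLieAlgebra_general R L V₀ V₁ hsup hbr π hπ₀ hπ₁
end

section
/- Let R be a commutative ring, L a Lie algebra over R, and S a commutative semigroup, and equip Finsupp S L with the S-expanded bracket. Suppose z ∈ S is an absorbing element: z * s = z for all s ∈ S. Then the R-submodule I = {f ∈ Finsupp S L : f.support ⊆ {z}} is a Lie ideal of the S-expanded algebra: for every g ∈ Finsupp S L and every f ∈ I, ⁅g, f⁆ ∈ I. -/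
namespace Finsupp

variable {R S M N P : Type*} [CommSemiring R] [Mul S]
  [AddCommMonoid M] [AddCommMonoid N] [AddCommMonoid P] [Module R M] [Module R N] [Module R P]

theorem support_bilinear_apply_single_subset_image [DecidableEq S]
    (B : (S →₀ M) →ₗ[R] (S →₀ N) →ₗ[R] (S →₀ P)) (μ : M → N → P)
    (hB : ∀ (s t : S) (x : M) (y : N), B (single s x) (single t y) = single (s * t) (μ x y))
    (g : S →₀ M) (t : S) (y : N) :
    (B g (single t y)).support ⊆ g.support.image (· * t) := by
  have hsum : B g (single t y) = g.sum fun s x => single (s * t) (μ x y) := by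
    conv_lhs => rw [← g.sum_single]
    simp only [map_finsuppSum, LinearMap.finsupp_sum_apply, hB]
  rw [hsum, ← Finset.biUnion_singleton]
  exact support_sum.trans <| Finset.biUnion_mono fun _ _ => support_single_subset

end Finsupp

/-- **The `0_S`-components form a Lie ideal of the S-expanded algebra.**
Let `B` be the S-expanded bracket on `S →₀ L` (the unique `R`-bilinear
bracket with `⁅single s x, single t y⁆ = single (s * t) ⁅x, y⁆`) and let
`z ∈ S` be absorbing (`z * s = z` for all `s`).  Then the submodule
`I = {f | f.support ⊆ {z}}` is a Lie ideal: `⁅g, f⁆ ∈ I` for every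
`g : S →₀ L` and every `f ∈ I`. -/
theorem sExpansion_absorbing_isIdeal
    (R : Type*) [CommRing R] (L : Type*) [LieRing L] [LieAlgebra R L]
    (S : Type*) [CommSemigroup S]
    (B : (S →₀ L) →ₗ[R] (S →₀ L) →ₗ[R] (S →₀ L))
    (hB : ∀ (s t : S) (x y : L),
      B (Finsupp.single s x) (Finsupp.single t y)
        = Finsupp.single (s * t) ⁅x, y⁆)
    (z : S) (hz : ∀ s : S, z * s = z) :
    ∀ g f : S →₀ L, f.support ⊆ {z} → (B g f).support ⊆ {z} := by
  classical
  intro g f hf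
  rw [Finsupp.support_subset_singleton.mp hf]
  refine (Finsupp.support_bilinear_apply_single_subset_image B _ hB g z (f z)).trans ?_
  rw [Finset.image_subset_iff]
  intro s _
  rw [Finset.mem_singleton, mul_comm, hz]
end

section
/- Let R be a commutative ring, L a Lie algebra over R, S a commutative semigroup, and equip Finsupp S L with the S-expanded bracket. Let ι be an index type, V : ι → Submodule R L a family of submodules, and i : ι → ι → Set ι a family of index sets such that for all p, q ∈ ι, ⁅V p, V q⁆ ⊆ ⨆_{r ∈ i p q} V r. Let T : ι → Set S be a family of subsets of S satisfying the resonance condition: for all p, q ∈ ι, for all s ∈ T p and t ∈ T q, the product s * t belongs to ⋂_{r ∈ i p q} T r. Define G_R to be the R-submodule of Finsupp S L spanned by the set {Finsupp.single s x : there exists p ∈ ι with s ∈ T p and x ∈ V p}. Then G_R is closed under the S-expanded bracket: ⁅G_R, G_R⁆ ⊆ G_R, i.e., G_R is a Lie subalgebra of the S-expanded algebra. -/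
/-- **The resonant subalgebra** (Theorem 2 of the paper).
Let `B` be the S-expanded bracket on `S →₀ L`.  Given a family of submodules
`V p` of `L` with `⁅V p, V q⁆ ⊆ ⨆ r ∈ i p q, V r`, and a resonant family of
subsets `T p ⊆ S` (i.e. `T p * T q ⊆ ⋂ r ∈ i p q, T r`), the submodule
`G_R` spanned by `{single s x | s ∈ T p, x ∈ V p for some p}` is closed
under the bracket: it is a Lie subalgebra of the S-expanded algebra. -/
theorem resonantSubalgebra_closed
    (R : Type*) [CommRing R] (L : Type*) [LieRing L] [LieAlgebra R L]
    (S : Type*) [CommSemigroup S]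
    (B : (S →₀ L) →ₗ[R] (S →₀ L) →ₗ[R] (S →₀ L))
    (hB : ∀ (s t : S) (x y : L),
      B (Finsupp.single s x) (Finsupp.single t y)
        = Finsupp.single (s * t) ⁅x, y⁆)
    (ι : Type*) (V : ι → Submodule R L) (i : ι → ι → Set ι)
    (hV : ∀ p q : ι, ∀ x ∈ V p, ∀ y ∈ V q, ⁅x, y⁆ ∈ ⨆ r ∈ i p q, V r)
    (T : ι → Set S)
    (hT : ∀ p q : ι, ∀ s ∈ T p, ∀ t ∈ T q, s * t ∈ ⋂ r ∈ i p q, T r)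
    (G_R : Submodule R (S →₀ L))
    (hG : G_R = Submodule.span R
      {f : S →₀ L | ∃ (p : ι) (s : S) (x : L),
        s ∈ T p ∧ x ∈ V p ∧ f = Finsupp.single s x}) :
    ∀ f ∈ G_R, ∀ g ∈ G_R, B f g ∈ G_R := by
  subst hG
  intro f hf
  refine Submodule.span_induction ?_ ?_ ?_ ?_ hf
  · rintro f ⟨p, s, x, hs, hx, rfl⟩ g hg
    refine Submodule.span_induction ?_ ?_ ?_ ?_ hg
    · rintro g ⟨q, t, y, ht, hy, rfl⟩
      rw [hB]
      have hst : ∀ r ∈ i p q, s * t ∈ T r := by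
        have := hT p q s hs t ht
        simpa [Set.mem_iInter] using this
      -- single (s*t) applied to elements of ⨆ r ∈ i p q, V r lands in the span
      have key : ⁅x, y⁆ ∈ (⨆ r ∈ i p q, V r) := hV p q x hx y hy
      have : (⨆ r ∈ i p q, V r) ≤ Submodule.comap (Finsupp.lsingle (R := R) (s * t))
          (Submodule.span R {f : S →₀ L | ∃ (p : ι) (s : S) (x : L),
            s ∈ T p ∧ x ∈ V p ∧ f = Finsupp.single s x}) := by
        refine iSup_le fun r => iSup_le fun hr z hz => ?_
        exact Submodule.subset_span ⟨r, s * t, z, hst r hr, hz, rfl⟩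
      exact this key
    · simp
    · intro a b _ _ ha hb
      rw [map_add]; exact Submodule.add_mem _ ha hb
    · intro c a _ ha
      rw [map_smul]; exact Submodule.smul_mem _ c ha
  · intro g _; simp
  · intro a b _ _ ha hb g hg
    rw [map_add, LinearMap.add_apply]
    exact Submodule.add_mem _ (ha g hg) (hb g hg)
  · intro c a _ ha g hg
    rw [map_smul, LinearMap.smul_apply]
    exact Submodule.smul_mem _ c (ha g hg)
end

section
/- Let R be a commutative ring, L a Lie algebra over R, S a commutative semigroup, and equip Finsupp S L with the S-expanded bracket. Let ι be an index type, V : ι → Submodule R L with ⁅V p, V q⁆ ⊆ ⨆_{r ∈ i p q} V r for a family i : ι → ι → Set ι. For each p ∈ ι, let Š p and Ŝ p be subsets of S with Š p ∩ Ŝ p = ∅, and assume that for all p, q ∈ ι, for all s ∈ Š p and t ∈ Ŝ q, the product s * t belongs to ⋂_{r ∈ i p q} Ŝ r. Define Ǧ to be the R-submodule of Finsupp S L spanned by {Finsupp.single s x : ∃ p, s ∈ Š p ∧ x ∈ V p}, and Ĝ the R-submodule spanned by {Finsupp.single s x : ∃ p, s ∈ Ŝ p ∧ x ∈ V p}. Then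 ⁅Ǧ, Ĝ⁆ ⊆ Ĝ. -/
/-- **Reduction of a resonant subalgebra** (Theorem 3 of the paper).
Let `B` be the S-expanded bracket on `S →₀ L`.  Given submodules `V p` of `L`
with `⁅V p, V q⁆ ⊆ ⨆ r ∈ i p q, V r`, and for each `p` disjoint subsets
`Š p, Ŝ p ⊆ S` (here `Sdown p, Sup p`) with `Š p * Ŝ q ⊆ ⋂ r ∈ i p q, Ŝ r`,
the submodules `Ǧ = span {single s x | s ∈ Š p, x ∈ V p}` (here `Gdown`) and
`Ĝ = span {single s x | s ∈ Ŝ p, x ∈ V p}` (here `Gup`) satisfy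
`⁅Ǧ, Ĝ⁆ ⊆ Ĝ`. -/
theorem reduction_of_resonantSubalgebra
    (R : Type*) [CommRing R] (L : Type*) [LieRing L] [LieAlgebra R L]
    (S : Type*) [CommSemigroup S]
    (B : (S →₀ L) →ₗ[R] (S →₀ L) →ₗ[R] (S →₀ L))
    (hB : ∀ (s t : S) (x y : L),
      B (Finsupp.single s x) (Finsupp.single t y)
        = Finsupp.single (s * t) ⁅x, y⁆)
    (ι : Type*) (V : ι → Submodule R L) (i : ι → ι → Set ι)
    (hV : ∀ p q : ι, ∀ x ∈ V p, ∀ y ∈ V q, ⁅x, y⁆ ∈ ⨆ r ∈ i p q, V r)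
    (Sdown Sup : ι → Set S)
    (hdisj : ∀ p : ι, Sdown p ∩ Sup p = ∅)
    (hred : ∀ p q : ι, ∀ s ∈ Sdown p, ∀ t ∈ Sup q, s * t ∈ ⋂ r ∈ i p q, Sup r)
    (Gdown Gup : Submodule R (S →₀ L))
    (hGdown : Gdown = Submodule.span R
      {f : S →₀ L | ∃ (p : ι) (s : S) (x : L),
        s ∈ Sdown p ∧ x ∈ V p ∧ f = Finsupp.single s x})
    (hGup : Gup = Submodule.span R
      {f : S →₀ L | ∃ (p : ι) (s : S) (x : L),
        s ∈ Sup p ∧ x ∈ V p ∧ f = Finsupp.single s x}) :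
    ∀ f ∈ Gdown, ∀ g ∈ Gup, B f g ∈ Gup := by
  intro f hf
  rw [hGdown] at hf
  induction hf using Submodule.span_induction with
  | zero => intro g _; simp
  | add f₁ f₂ _ _ h1 h2 => intro g hg; rw [map_add]; exact Gup.add_mem (h1 g hg) (h2 g hg)
  | smul c f _ h => intro g hg; rw [map_smul]; exact Gup.smul_mem c (h g hg)
  | mem f hfmem =>
    obtain ⟨p, s, x, hs, hx, rfl⟩ := hfmem
    intro g hg
    rw [hGup] at hg
    induction hg using Submodule.span_induction with
    | zero => simp
    | add g₁ g₂ _ _ h1 h2 => rw [map_add]; exact Gup.add_mem h1 h2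
    | smul c g _ h => rw [map_smul]; exact Gup.smul_mem c h
    | mem g hgmem =>
      obtain ⟨q, t, y, ht, hy, rfl⟩ := hgmem
      rw [hB]
      have hbr := hV p q x hx y hy
      have hle : (⨆ r ∈ i p q, V r) ≤ Gup.comap (Finsupp.lsingle (R := R) (s * t)) := by
        refine iSup_le fun r => iSup_le fun hr z hz => ?_
        have hst : s * t ∈ Sup r := by
          have := hred p q s hs t ht
          exact Set.mem_iInter₂.mp this r hr
        rw [hGup]
        exact Submodule.subset_span ⟨r, s * t, z, hst, hz, rfl⟩
      exact hle hbr
end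

section
/- Let R be a commutative ring, L a Lie algebra over R, n ≥ 1 a natural number, and Φ : (Fin n → L) → R an R-multilinear map which is an invariant tensor on L, i.e., for every x ∈ L and every v : Fin n → L, ∑_{p : Fin n} Φ (Function.update v p ⁅x, v p⁆) = 0. Let S be a commutative semigroup and f : S → R an arbitrary function. Equip Finsupp S L with the S-expanded bracket, and define Ψ : (Fin n → Finsupp S L) → R by Ψ g = ∑_{s} f (s 0 * s 1 * ⋯ * s (n-1)) * Φ (fun i => (g i) (s i)), the sum ranging over all tuples s : Fin n → S with s i in the support of g i for each i (a finite sum). Then Ψ is an invariant tensor for the S-expanded algebra: for every w ∈ Finsupp S L and every g : Fin n → Finsupp S L, ∑_{p : Fin n} Ψ (Function.update g p ⁅w, g p⁆) = 0. -/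
/-!
The invariance defect `∑ₚ Ψ (update g p (B w (g p)))` of the expanded tensor is linear in `w`
and multilinear in `g`, so it suffices to compute it on generators `Finsupp.single`. On
`w = single t x` and `g i = single (σ i) (y i)` the bracket multiplies the `p`-th index by `t`,
which multiplies the product of the indices by `t` whatever `p` is; the defect therefore factors
as `f (t * ∏ σ) * ∑ₚ Φ (update y p ⁅x, y p⁆)`, which vanishes by invariance of `Φ`.
-/

/-- The ordered product `s 0 * s 1 * ⋯ * s n` of a tuple of `n+1` elements of
a semigroup (which need not have an identity). -/
def finSemigroupProd {S : Type*} [Mul S] {n : ℕ} (s : Fin (n + 1) → S) : S :=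
  (List.ofFn fun i : Fin n => s i.succ).foldl (· * ·) (s 0)

theorem WithOne.coe_foldl_mul {S : Type*} [Semigroup S] (l : List S) (a : S) :
    ((l.foldl (· * ·) a : S) : WithOne S) = a * (l.map ((↑) : S → WithOne S)).prod := by
  induction l generalizing a with
  | nil => simp
  | cons b l ih => simp [ih, mul_assoc]

theorem coe_finSemigroupProd {S : Type*} [CommSemigroup S] {n : ℕ} (s : Fin (n + 1) → S) :
    ((finSemigroupProd s : S) : WithOne S) = ∏ i, (s i : WithOne S) := by
  rw [finSemigroupProd, WithOne.coe_foldl_mul, List.map_ofFn, Fin.prod_univ_succ, List.prod_ofFn]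
  rfl

theorem finSemigroupProd_update_mul {S : Type*} [CommSemigroup S] {n : ℕ}
    (t : S) (σ : Fin (n + 1) → S) (p : Fin (n + 1)) :
    finSemigroupProd (Function.update σ p (t * σ p)) = t * finSemigroupProd σ := by
  have hcoe (i) : (Function.update σ p (t * σ p) i : WithOne S)
      = (Pi.mulSingle p (t : WithOne S) : Fin (n + 1) → WithOne S) i * σ i := by
    rcases eq_or_ne i p with rfl | h
    · simp
    · simp [h]
  apply WithOne.coe_injective
  rw [WithOne.coe_mul, coe_finSemigroupProd, coe_finSemigroupProd,
    Finset.prod_congr rfl fun i _ => hcoe i, Finset.prod_mul_distrib,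
    Finset.prod_pi_mulSingle', if_pos (Finset.mem_univ p)]

def IsInvariantTensor {ι M N : Type*} [Fintype ι] [DecidableEq ι] [AddCommMonoid N]
    (Ψ : (ι → M) → N) (ad : M → M → M) : Prop :=
  ∀ x v, ∑ p, Ψ (Function.update v p (ad x (v p))) = 0

namespace MultilinearMap

variable {R ι S M N : Type*} [CommSemiring R] [AddCommMonoid M] [Module R M]
  [AddCommMonoid N] [Module R N]

theorem finsupp_ext [Finite ι] ⦃f g : MultilinearMap R (fun _ : ι => S →₀ M) N⦄
    (h : ∀ (s : ι → S) (m : ι → M),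
      f (fun i => Finsupp.single (s i) (m i)) = g (fun i => Finsupp.single (s i) (m i))) :
    f = g := by
  ext x
  classical
  cases nonempty_fintype ι
  rw [funext fun i => (Finsupp.sum_single (x i)).symm]
  simp_rw [Finsupp.sum, MultilinearMap.map_sum_finset]
  exact Finset.sum_congr rfl fun s _ => h _ _

theorem compLinearMap_update_id_apply [DecidableEq ι]
    (Ψ : MultilinearMap R (fun _ : ι => M) N) (p : ι) (A : M →ₗ[R] M) (g : ι → M) :
    Ψ.compLinearMap (Function.update (fun _ => LinearMap.id) p A) g
      = Ψ (Function.update g p (A (g p))) := by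
  rw [compLinearMap_apply]
  congr 1
  ext i
  rcases eq_or_ne i p with rfl | h
  · simp
  · simp [h]

theorem isInvariantTensor_of_single [Fintype ι] [DecidableEq ι]
    {Ψ : MultilinearMap R (fun _ : ι => S →₀ M) N}
    {B : (S →₀ M) →ₗ[R] (S →₀ M) →ₗ[R] (S →₀ M)}
    (h : ∀ (t : S) (x : M) (σ : ι → S) (y : ι → M),
      ∑ p, Ψ (Function.update (fun i => Finsupp.single (σ i) (y i)) p
        (B (Finsupp.single t x) (Finsupp.single (σ p) (y p)))) = 0) :
    IsInvariantTensor Ψ fun w => B w := by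
  intro w g
  induction w using Finsupp.induction_linear with
  | zero => simp [Ψ.map_update_zero]
  | add w₁ w₂ h₁ h₂ =>
    simp only [map_add, LinearMap.add_apply, Ψ.map_update_add, Finset.sum_add_distrib, h₁, h₂,
      add_zero]
  | single t x =>
    have hD : ∑ p, Ψ.compLinearMap
        (Function.update (fun _ => LinearMap.id) p (B (Finsupp.single t x))) = 0 :=
      finsupp_ext fun σ y => by
        simpa only [sum_apply, compLinearMap_update_id_apply, zero_apply] using h t x σ y
    simpa only [sum_apply, compLinearMap_update_id_apply, zero_apply] using congr($hD g)

end MultilinearMap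

section ExpandedTensor

variable {R ι S L : Type*} [Fintype ι] [DecidableEq ι]

open scoped Classical in
/-- `expandedTensor Φ c g = ∑ₛ c s * Φ (fun i => g i (s i))` (`expandedTensor_apply`); with
`c = f ∘ finSemigroupProd` it is the paper's `α_γ K_{α₁⋯αₙ}^γ ⟨T_{A₁} ⋯ T_{Aₙ}⟩`. -/
noncomputable def expandedTensor [CommSemiring R] [AddCommMonoid L] [Module R L]
    (Φ : MultilinearMap R (fun _ : ι => L) R) (c : (ι → S) → R) :
    MultilinearMap R (fun _ : ι => S →₀ L) R :=
  (MultilinearMap.fromDFinsuppEquiv (fun _ : ι => S) R (M := fun _ _ => L)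
    fun s => c s • Φ).compLinearMap fun _ => (finsuppLequivDFinsupp R).toLinearMap

theorem expandedTensor_apply [CommSemiring R] [AddCommMonoid L] [Module R L]
    (Φ : MultilinearMap R (fun _ : ι => L) R) (c : (ι → S) → R) (g : ι → S →₀ L) :
    expandedTensor Φ c g
      = ∑ s ∈ Fintype.piFinset fun i => (g i).support, c s * Φ fun i => g i (s i) := by
  classical
  simp [expandedTensor, MultilinearMap.fromDFinsuppEquiv_apply]

theorem expandedTensor_single [CommSemiring R] [AddCommMonoid L] [Module R L]
    (Φ : MultilinearMap R (fun _ : ι => L) R) (c : (ι → S) → R) (s : ι → S) (y : ι → L) :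
    expandedTensor Φ c (fun i => Finsupp.single (s i) (y i)) = c s * Φ y := by
  classical
  simp [expandedTensor]

theorem expandedTensor_isInvariantTensor [CommRing R] [Mul S] [LieRing L] [LieAlgebra R L]
    {Φ : MultilinearMap R (fun _ : ι => L) R} (hΦ : IsInvariantTensor Φ fun x y => ⁅x, y⁆)
    {B : (S →₀ L) →ₗ[R] (S →₀ L) →ₗ[R] (S →₀ L)}
    (hB : ∀ (s t : S) (x y : L),
      B (Finsupp.single s x) (Finsupp.single t y) = Finsupp.single (s * t) ⁅x, y⁆)
    (f : S → R) {π : (ι → S) → S}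
    (hπ : ∀ (t : S) (σ : ι → S) (p : ι), π (Function.update σ p (t * σ p)) = t * π σ) :
    IsInvariantTensor (expandedTensor Φ (f ∘ π)) fun w => B w := by
  refine MultilinearMap.isInvariantTensor_of_single fun t x σ y => ?_
  have hsingles (p : ι) :
      Function.update (fun i => Finsupp.single (σ i) (y i)) p
          (B (Finsupp.single t x) (Finsupp.single (σ p) (y p)))
        = fun i => Finsupp.single (Function.update σ p (t * σ p) i)
            (Function.update y p ⁅x, y p⁆ i) := by
    ext1 i
    rw [hB, Function.apply_update₂ (fun _ => Finsupp.single)]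
  simp only [hsingles, expandedTensor_single, Function.comp_apply, hπ, ← Finset.mul_sum,
    hΦ x y, mul_zero]

end ExpandedTensor

/-- **Invariant tensors for S-expanded algebras** (Theorem 4 of the paper).
Let `Φ` be an `R`-multilinear invariant tensor of rank `n+1 ≥ 1` on a Lie
algebra `L`, let `B` be the S-expanded bracket on `S →₀ L`, let `f : S → R`
be arbitrary constants, and let
`Ψ g = ∑_{s, s i ∈ (g i).support} f (s 0 * ⋯ * s n) * Φ (fun i => g i (s i))`.
Then `Ψ` is an invariant tensor for the S-expanded algebra. -/
theorem sExpansion_invariant_tensor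
    (R : Type*) [CommRing R] (L : Type*) [LieRing L] [LieAlgebra R L]
    (S : Type*) [CommSemigroup S]
    (n : ℕ)
    (Φ : MultilinearMap R (fun _ : Fin (n + 1) => L) R)
    (hΦ : ∀ (x : L) (v : Fin (n + 1) → L),
      ∑ p : Fin (n + 1), Φ (Function.update v p ⁅x, v p⁆) = 0)
    (B : (S →₀ L) →ₗ[R] (S →₀ L) →ₗ[R] (S →₀ L))
    (hB : ∀ (s t : S) (x y : L),
      B (Finsupp.single s x) (Finsupp.single t y)
        = Finsupp.single (s * t) ⁅x, y⁆)
    (f : S → R)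
    (Ψ : (Fin (n + 1) → (S →₀ L)) → R)
    (hΨ : ∀ g : Fin (n + 1) → (S →₀ L),
      Ψ g = ∑ s ∈ Fintype.piFinset (fun i => (g i).support),
        f (finSemigroupProd s) * Φ (fun i => (g i) (s i))) :
    ∀ (w : S →₀ L) (g : Fin (n + 1) → (S →₀ L)),
      ∑ p : Fin (n + 1), Ψ (Function.update g p (B w (g p))) = 0 := by
  obtain rfl : Ψ = expandedTensor Φ (f ∘ finSemigroupProd) :=
    funext fun g => (hΨ g).trans (expandedTensor_apply Φ _ g).symm
  exact expandedTensor_isInvariantTensor hΦ hB f finSemigroupProd_update_mul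
end

section
/- Let n, N be natural numbers with n ≤ N + 1, and consider the semigroup S_E^(N) (the set {0, 1, ..., N+1} with product α · β = min(α + β, N + 1)). Let N_0, N_1, ..., N_n be natural numbers such that p ≤ N_p ≤ N for every p ≤ n, and such that for every p < n, either N_{p+1} = N_p or N_{p+1} = N_p + 1. Define, for p ≤ n, Š_p = {α : p ≤ α ≤ N_p} and Ŝ_p = {α : N_p + 1 ≤ α ≤ N + 1}. Then for every p ≤ n: Š_p ∩ Ŝ_p = ∅ and Š_p ∪ Ŝ_p = {α : p ≤ α ≤ N + 1}; and for all p, q ≤ n, for every α ∈ Š_p and β ∈ Ŝ_q, the product min(α + β, N + 1) belongs to ⋂_{r = 0}^{min(p+q, n)} Ŝ_r. -/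
/-- **The reduction condition in the Weimar-Woods case** (Appendix of the
paper).  In the semigroup `S_E^(N)` = `{0, …, N+1}` with product
`α · β = min (α + β) (N+1)`, given truncation orders `N_p` with
`p ≤ N_p ≤ N` for `p ≤ n ≤ N+1` and `N_{p+1} = N_p` or `N_p + 1`, the sets
`Š_p = {α | p ≤ α ≤ N_p}` and `Ŝ_p = {α | N_p + 1 ≤ α ≤ N+1}` partition
`S_p = {α | p ≤ α ≤ N+1}` and satisfy the reduction condition
`Š_p · Ŝ_q ⊆ ⋂_{r ≤ min (p+q) n} Ŝ_r`. -/
theorem weimarWoods_reduction_condition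
    (n N : ℕ) (hn : n ≤ N + 1)
    (Np : ℕ → ℕ)
    (hNp : ∀ p ≤ n, p ≤ Np p ∧ Np p ≤ N)
    (hstep : ∀ p < n, Np (p + 1) = Np p ∨ Np (p + 1) = Np p + 1)
    (Sdown Sup : ℕ → Set ℕ)
    (hSdown : ∀ p, Sdown p = {α | p ≤ α ∧ α ≤ Np p})
    (hSup : ∀ p, Sup p = {α | Np p + 1 ≤ α ∧ α ≤ N + 1}) :
    (∀ p ≤ n, Sdown p ∩ Sup p = ∅ ∧
      Sdown p ∪ Sup p = {α : ℕ | p ≤ α ∧ α ≤ N + 1}) ∧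
    (∀ p ≤ n, ∀ q ≤ n, ∀ α ∈ Sdown p, ∀ β ∈ Sup q,
      min (α + β) (N + 1) ∈ ⋂ r ∈ {r : ℕ | r ≤ min (p + q) n}, Sup r) := by
  -- monotonicity / Lipschitz property of Np along steps
  have key : ∀ j ≤ n, ∀ i ≤ j, Np i ≤ Np j ∧ Np j ≤ Np i + (j - i) := by
    intro j
    induction j with
    | zero => intro _ i hi; interval_cases i; simp
    | succ j ih =>
      intro hj i hi
      rcases Nat.lt_or_ge j n with hjn | hjn
      · rcases Nat.lt_succ_iff_lt_or_eq.mp (Nat.lt_succ_of_le hi) with hij | rfl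
        · have h1 := ih (Nat.le_of_succ_le hj) i (Nat.lt_succ_iff.mp hij)
          have hi' : i ≤ j := Nat.lt_succ_iff.mp hij
          have h2 := hstep j hjn
          rcases h2 with h | h <;> constructor <;> omega
        · simp
      · omega
  constructor
  · intro p hp
    constructor
    · rw [hSdown, hSup]
      ext x; simp only [Set.mem_inter_iff, Set.mem_setOf_eq, Set.mem_empty_iff_false,
        iff_false]
      omega
    · rw [hSdown, hSup]
      have := hNp p hp
      ext x; simp only [Set.mem_union, Set.mem_setOf_eq]
      omega
  · intro p hp q hq α hα β hβ
    rw [hSdown] at hα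
    rw [hSup] at hβ
    simp only [Set.mem_setOf_eq] at hα hβ
    simp only [Set.mem_iInter, Set.mem_setOf_eq]
    intro r hr
    rw [hSup]
    have hrn : r ≤ n := le_trans hr (min_le_right _ _)
    have hrpq : r ≤ p + q := le_trans hr (min_le_left _ _)
    have hNr : Np r ≤ Np q + p := by
      rcases le_total r q with h | h
      · have := (key q hq r h).1; omega
      · have := (key r hrn q h).2; omega
    have hNrN : Np r ≤ N := (hNp r hrn).2
    simp only [Set.mem_setOf_eq]
    omega
end

section
/- Let S be a finite commutative semigroup with decidable equality, R a commutative ring, and d ≥ 0, n ≥ 1 natural numbers. For a ∈ S, let M a : Matrix S S R be the regular-representation matrix (M a) μ ν = 1 if μ * a = ν and 0 otherwise. Then for every α : Fin n → S and every A : Fin n → Matrix (Fin d) (Fin d) R, the trace of the ordered product ∏_{i : Fin n} ((M (α i)) ⊗ₖ (A i)) of Kronecker products equals c • trace (∏_{i : Fin n} A i), where c is the cardinality of the set {γ ∈ S : γ * (α 0 * α 1 * ⋯ * α (n-1)) = γ}. -/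
/-- The matrix `[λ_a]_μ^ν = K_{μa}^ν` built from the `2`-selector of a
semigroup `S`: its `(μ, ν)` entry is `1` when `μ * a = ν` and `0` otherwise. -/
def selectorMatrix (R : Type*) [One R] [Zero R] {S : Type*} [Mul S]
    [DecidableEq S] (a : S) : Matrix S S R :=
  Matrix.of fun μ ν => if μ * a = ν then 1 else 0

lemma selectorMatrix_mul (R : Type*) [CommRing R] {S : Type*} [Fintype S]
    [DecidableEq S] [Semigroup S] (a b : S) :
    selectorMatrix R a * selectorMatrix R b = selectorMatrix R (a * b) := by
  ext μ ν
  simp only [Matrix.mul_apply, selectorMatrix, Matrix.of_apply]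
  rw [Finset.sum_eq_single (μ * a)]
  · simp [mul_assoc]
  · intro κ _ hκ
    simp [Ne.symm hκ]
  · simp

lemma foldl_mul_assoc {S : Type*} [Semigroup S] (l : List S) (x y : S) :
    l.foldl (· * ·) (x * y) = x * l.foldl (· * ·) y := by
  induction l generalizing y with
  | nil => rfl
  | cons a l ih => simpa [mul_assoc] using ih (y * a)

lemma finSemigroupProd_succ {S : Type*} [Semigroup S] {n : ℕ}
    (s : Fin (n + 2) → S) :
    finSemigroupProd s = s 0 * finSemigroupProd (fun i => s i.succ) := by
  simp [finSemigroupProd, List.ofFn_succ, foldl_mul_assoc]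

lemma prod_kronecker_selector
    (S : Type*) [Fintype S] [DecidableEq S] [Semigroup S]
    (R : Type*) [CommRing R] (d : ℕ) : ∀ (n : ℕ)
    (α : Fin (n + 1) → S) (A : Fin (n + 1) → Matrix (Fin d) (Fin d) R),
    (List.ofFn fun i : Fin (n + 1) =>
        Matrix.kroneckerMap (· * ·) (selectorMatrix R (α i)) (A i)).prod
      = Matrix.kroneckerMap (· * ·) (selectorMatrix R (finSemigroupProd α))
          (List.ofFn fun i : Fin (n + 1) => A i).prod := by
  intro n
  induction n with
  | zero =>
    intro α A
    simp [finSemigroupProd, List.ofFn_succ]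
  | succ n ih =>
    intro α A
    rw [List.ofFn_succ, List.prod_cons, List.ofFn_succ (f := A), List.prod_cons,
      ih (fun i => α i.succ) (fun i => A i.succ), finSemigroupProd_succ]
    rw [← Matrix.mul_kronecker_mul, selectorMatrix_mul]

/-- **The (super)trace in the expanded representation** (Section VII of the
paper).  In the representation `T_{(A,α)} = [λ_α] ⊗ T_A`, the trace of an
ordered product equals the number of `γ ∈ S` fixed by multiplication with
`α 0 * ⋯ * α n` (i.e. `K_{γ α₀ ⋯ αₙ}^γ` summed over `γ`) times the trace of
the corresponding ordered product of the `T_A`'s. -/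
theorem trace_kronecker_selector_rep
    (S : Type*) [Fintype S] [DecidableEq S] [CommSemigroup S]
    (R : Type*) [CommRing R] (d n : ℕ)
    (α : Fin (n + 1) → S) (A : Fin (n + 1) → Matrix (Fin d) (Fin d) R) :
    Matrix.trace
        (List.ofFn fun i : Fin (n + 1) =>
          Matrix.kroneckerMap (· * ·) (selectorMatrix R (α i)) (A i)).prod
      = (Finset.univ.filter
            fun γ : S => γ * finSemigroupProd α = γ).card •
          Matrix.trace (List.ofFn fun i : Fin (n + 1) => A i).prod := by
  rw [prod_kronecker_selector]
  rw [show Matrix.kroneckerMap (· * ·) = Matrix.kroneckerMap (HMul.hMul) from rfl]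
  rw [Matrix.trace_kronecker]
  have : Matrix.trace (selectorMatrix R (finSemigroupProd α))
      = ((Finset.univ.filter fun γ : S => γ * finSemigroupProd α = γ).card : R) := by
    simp [Matrix.trace, Matrix.diag, selectorMatrix]
  rw [this, nsmul_eq_mul]
end
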